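/- arXiv:2406.16608 — 7 statements merged into one kernel-verified Lean document; each statement's English description precedes it below -/
import Mathlib

section
/- Let Y be a finite nonempty type, Z a measurable space, and λ a σ-finite measure on Z. Let f : Y → Z → ℝ≥0 be a family of measurable density functions with ∫ f_y dλ = 1 for every y, and let p : Y → ℝ≥0 be a label distribution. Suppose there exist labels y₀ ≠ y₁ with p(y₀) > 0 and p(y₁) > 0 whose conditional supports overlap: λ({z | f_{y₀}(z) > 0 ∧ f_{y₁}(z) > 0}) > 0. Then for every measurable hypothesis h : Z → Y, the 0-1 risk is strictly positive: Σ_y p(y) · ∫_{z : h(z) ≠ y} f_y(z) dλ(z) > 0. -/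
open MeasureTheory

/-! On the overlap `S` of the two supports, `h` cannot equal both `y₀` and `y₁`, so it
misclassifies one of them, say `y`, on a subset of `S` of positive measure. There `f y > 0`, so the
term `p y * ∫_{h ≠ y} f y` of the risk is already positive. -/

lemma measure_inter_setOf_ne_pos_or_of_ne {α β : Type*} [MeasurableSpace α] {μ : Measure α}
    {s : Set α} (hs : 0 < μ s) (h : α → β) {b₀ b₁ : β} (hb : b₀ ≠ b₁) :
    0 < μ (s ∩ {x | h x ≠ b₀}) ∨ 0 < μ (s ∩ {x | h x ≠ b₁}) := by
  by_contra! hnull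
  simp only [nonpos_iff_eq_zero] at hnull
  have hcover : s ⊆ (s ∩ {x | h x ≠ b₀}) ∪ (s ∩ {x | h x ≠ b₁}) := fun x hx => by
    by_cases hx₀ : h x = b₀
    · exact Or.inr ⟨hx, by simpa [hx₀] using hb⟩
    · exact Or.inl ⟨hx, hx₀⟩
  exact hs.ne' (measure_mono_null hcover (measure_union_null hnull.1 hnull.2))

lemma setLIntegral_pos_of_pos_on {α : Type*} [MeasurableSpace α] {μ : Measure α}
    {f : α → ENNReal} (hf : Measurable f) {s t : Set α} (hpos : ∀ x ∈ t, 0 < f x)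
    (ht : 0 < μ (t ∩ s)) : 0 < ∫⁻ x in s, f x ∂μ :=
  (setLIntegral_pos_iff hf).2 <|
    ht.trans_le (measure_mono (Set.inter_subset_inter_left _ fun x hx => (hpos x hx).ne'))

theorem overlapping_supports_positive_risk_general
    {Y : Type*} [Fintype Y]
    {Z : Type*} [MeasurableSpace Z]
    (lam : Measure Z)
    (f : Y → Z → NNReal) (hfm : ∀ y, Measurable (f y))
    (p : Y → NNReal)
    (y₀ y₁ : Y) (hy : y₀ ≠ y₁) (hp₀ : 0 < p y₀) (hp₁ : 0 < p y₁)
    (hoverlap : 0 < lam {z | 0 < f y₀ z ∧ 0 < f y₁ z})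
    (h : Z → Y) :
    0 < ∑ y, (p y : ENNReal) * ∫⁻ z in {z | h z ≠ y}, (f y z : ENNReal) ∂lam := by
  set S : Set Z := {z | 0 < f y₀ z ∧ 0 < f y₁ z}
  have hrisk_pos (y : Y) (hpy : 0 < p y) (hfy : ∀ z ∈ S, 0 < f y z)
      (herr : 0 < lam (S ∩ {z | h z ≠ y})) :
      0 < ∑ y', (p y' : ENNReal) * ∫⁻ z in {z | h z ≠ y'}, (f y' z : ENNReal) ∂lam :=
    Finset.sum_pos_iff.2 ⟨y, Finset.mem_univ y, ENNReal.mul_pos (by simpa using hpy.ne')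
      (setLIntegral_pos_of_pos_on (hfm y).coe_nnreal_ennreal
        (fun z hz => by simpa using hfy z hz) herr).ne'⟩
  rcases measure_inter_setOf_ne_pos_or_of_ne hoverlap h hy with herr₀ | herr₁
  · exact hrisk_pos y₀ hp₀ (fun _ hz => hz.1) herr₀
  · exact hrisk_pos y₁ hp₁ (fun _ hz => hz.2) herr₁

/-- **Proposition 3(a)**: if two classes with positive prior have overlapping conditional
supports, then every measurable hypothesis has strictly positive 0-1 risk. -/
theorem overlapping_supports_positive_risk
    {Y : Type*} [Fintype Y] [Nonempty Y] [MeasurableSpace Y]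
    {Z : Type*} [MeasurableSpace Z]
    (lam : Measure Z) [SigmaFinite lam]
    (f : Y → Z → NNReal) (hfm : ∀ y, Measurable (f y))
    (hf1 : ∀ y, ∫⁻ z, (f y z : ENNReal) ∂lam = 1)
    (p : Y → NNReal) (hp : ∑ y, p y = 1)
    (y₀ y₁ : Y) (hy : y₀ ≠ y₁) (hp₀ : 0 < p y₀) (hp₁ : 0 < p y₁)
    (hoverlap : 0 < lam {z | 0 < f y₀ z ∧ 0 < f y₁ z})
    (h : Z → Y) (hh : Measurable h) :
    0 < ∑ y, (p y : ENNReal) * ∫⁻ z in {z | h z ≠ y}, (f y z : ENNReal) ∂lam :=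
  overlapping_supports_positive_risk_general lam f hfm p y₀ y₁ hy hp₀ hp₁ hoverlap h
end

section
/- Let Y be a finite nonempty type, Z a measurable space, and λ a σ-finite measure on Z. Let f : Y → Z → ℝ≥0 be a family of measurable density functions with ∫ f_y dλ = 1 for every y, and suppose the conditional supports are pairwise essentially disjoint: for all y ≠ y', λ({z | f_y(z) > 0 ∧ f_{y'}(z) > 0}) = 0. Then there exists a measurable hypothesis h : Z → Y such that ∫_{z : h(z) ≠ y} f_y(z) dλ(z) = 0 for every y ∈ Y; consequently, for every pair of label distributions p, q : Y → ℝ≥0, both risks vanish: Σ_y p(y) · ∫_{z : h(z) ≠ y} f_y dλ = 0 and Σ_y q(y) · ∫_{z : h(z) ≠ y} f_y dλ = 0. -/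
open MeasureTheory

/-- **Proposition 3(b)**: under conditional invariance with pairwise essentially disjoint
conditional supports, there is a measurable hypothesis with zero 0-1 risk on every class,
hence zero risk under both the source and target label distributions. -/
theorem disjoint_supports_perfect_hypothesis
    {Y : Type*} [Fintype Y] [Nonempty Y] [MeasurableSpace Y] [DiscreteMeasurableSpace Y]
    {Z : Type*} [MeasurableSpace Z]
    (lam : Measure Z) [SigmaFinite lam]
    (f : Y → Z → NNReal) (hfm : ∀ y, Measurable (f y))
    (hf1 : ∀ y, ∫⁻ z, (f y z : ENNReal) ∂lam = 1)
    (hdisj : ∀ y y' : Y, y ≠ y' → lam {z | 0 < f y z ∧ 0 < f y' z} = 0) :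
    ∃ h : Z → Y, Measurable h ∧
      (∀ y, ∫⁻ z in {z | h z ≠ y}, (f y z : ENNReal) ∂lam = 0) ∧
      (∀ p q : Y → NNReal, ∑ y, p y = 1 → ∑ y, q y = 1 →
        (∑ y, (p y : ENNReal) * ∫⁻ z in {z | h z ≠ y}, (f y z : ENNReal) ∂lam = 0 ∧
         ∑ y, (q y : ENNReal) * ∫⁻ z in {z | h z ≠ y}, (f y z : ENNReal) ∂lam = 0)) := by
  classical
  letI : LinearOrder Y := LinearOrder.lift' (Fintype.equivFin Y) (Fintype.equivFin Y).injective
  set y₀ : Y := Classical.arbitrary Y with hy₀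
  set S : Z → Finset Y := fun z => Finset.univ.filter fun y => 0 < f y z with hS
  set h : Z → Y := fun z => if hz : (S z).Nonempty then (S z).min' hz else y₀ with hh
  have hmemS : ∀ z y, y ∈ S z ↔ 0 < f y z := by intro z y; simp [hS]
  have hpre : ∀ y : Y, h ⁻¹' {y} =
      {z | 0 < f y z ∧ ∀ y', y' < y → f y' z = 0} ∪
      {z | (∀ y', f y' z = 0) ∧ y₀ = y} := by
    intro y
    ext z
    simp only [Set.mem_preimage, Set.mem_singleton_iff, Set.mem_union, Set.mem_setOf_eq, hh]
    by_cases hz : (S z).Nonempty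
    · simp only [dif_pos hz]
      constructor
      · rintro rfl
        left
        refine ⟨(hmemS z _).1 ((S z).min'_mem hz), fun y' hy' => ?_⟩
        by_contra hne
        have hmem : y' ∈ S z := (hmemS z y').2 (pos_iff_ne_zero.mpr hne)
        exact absurd ((S z).min'_le y' hmem) (not_le.mpr hy')
      · rintro (⟨h1, h2⟩ | ⟨h1, h2⟩)
        · have hy : y ∈ S z := (hmemS z y).2 h1
          refine le_antisymm ((S z).min'_le y hy) ?_
          by_contra hlt
          have hmin := (S z).min'_mem hz
          have := h2 _ (not_le.mp hlt)
          rw [hmemS] at hmin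
          simp [this] at hmin
        · obtain ⟨y', hy'⟩ := hz
          rw [hmemS] at hy'
          simp [h1 y'] at hy'
    · simp only [dif_neg hz]
      constructor
      · rintro rfl
        right
        refine ⟨fun y' => ?_, rfl⟩
        by_contra hne
        exact hz ⟨y', (hmemS z y').2 (pos_iff_ne_zero.mpr hne)⟩
      · rintro (⟨h1, _⟩ | ⟨_, h2⟩)
        · exact absurd ⟨y, (hmemS z y).2 h1⟩ hz
        · exact h2
  have hmeas : Measurable h := by
    apply measurable_to_countable'
    intro y
    rw [hpre y]
    have ha : MeasurableSet {z | 0 < f y z} := (hfm y) measurableSet_Ioi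
    have hb : MeasurableSet {z | ∀ y', y' < y → f y' z = 0} := by
      have he : {z | ∀ y', y' < y → f y' z = 0} = ⋂ y', {z | y' < y → f y' z = 0} := by
        ext z; simp
      rw [he]
      refine MeasurableSet.iInter fun y' => ?_
      by_cases hlt : y' < y
      · have he2 : {z | y' < y → f y' z = 0} = (f y') ⁻¹' {0} := by
          ext z; simp [hlt]
        rw [he2]
        exact (hfm y') (measurableSet_singleton 0)
      · have he2 : {z | y' < y → f y' z = 0} = Set.univ := by
          ext z; simp [hlt]
        rw [he2]; exact MeasurableSet.univ
    apply MeasurableSet.union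
    · exact ha.inter hb
    · by_cases hy : y₀ = y
      · have : {z | (∀ y', f y' z = 0) ∧ y₀ = y} = ⋂ y', (f y') ⁻¹' {0} := by
          ext z; simp [hy]
        rw [this]
        exact MeasurableSet.iInter fun y' => (hfm y') (measurableSet_singleton 0)
      · have : {z | (∀ y', f y' z = 0) ∧ y₀ = y} = ∅ := by
          ext z; simp [hy]
        rw [this]; exact MeasurableSet.empty
  have hzero : ∀ y, ∫⁻ z in {z | h z ≠ y}, (f y z : ENNReal) ∂lam = 0 := by
    intro y
    have hsm : MeasurableSet {z | h z ≠ y} := (hmeas (measurableSet_singleton y)).compl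
    set N : Set Z := ⋃ y' : Y, {z | y' ≠ y ∧ 0 < f y z ∧ 0 < f y' z} with hN
    have hNnull : lam N = 0 := by
      refine measure_iUnion_null fun y' => ?_
      by_cases hy' : y' = y
      · simp [hy']
      · have : {z | y' ≠ y ∧ 0 < f y z ∧ 0 < f y' z} ⊆ {z | 0 < f y z ∧ 0 < f y' z} := by
          intro z hz; exact hz.2
        exact measure_mono_null this (hdisj y y' (Ne.symm hy'))
    have hsub : {z | h z ≠ y} ∩ {z | 0 < f y z} ⊆ N := by
      rintro z ⟨hz1, hz2⟩
      have hnz : (S z).Nonempty := ⟨y, (hmemS z y).2 hz2⟩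
      have hhz : h z = (S z).min' hnz := by simp [hh, dif_pos hnz]
      have hmem : 0 < f (h z) z := by
        rw [hhz]; exact (hmemS z _).1 ((S z).min'_mem hnz)
      exact Set.mem_iUnion.2 ⟨h z, hz1, hz2, hmem⟩
    have hae : ∀ᵐ z ∂(lam.restrict {z | h z ≠ y}), (f y z : ENNReal) = 0 := by
      rw [ae_iff]
      have hmt : MeasurableSet {z | ¬ (f y z : ENNReal) = 0} := by
        have : {z | ¬ (f y z : ENNReal) = 0} = (f y) ⁻¹' {0}ᶜ := by
          ext z; simp
        rw [this]
        exact (hfm y) (measurableSet_singleton 0).compl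
      rw [Measure.restrict_apply hmt]
      refine measure_mono_null ?_ hNnull
      intro z hz
      refine hsub ⟨hz.2, ?_⟩
      simp only [Set.mem_setOf_eq, ENNReal.coe_eq_zero] at hz
      exact pos_iff_ne_zero.mpr hz.1
    calc ∫⁻ z in {z | h z ≠ y}, (f y z : ENNReal) ∂lam
        = ∫⁻ _ in {z | h z ≠ y}, 0 ∂lam := lintegral_congr_ae hae
      _ = 0 := lintegral_zero
  refine ⟨h, hmeas, hzero, fun p q _ _ => ⟨?_, ?_⟩⟩ <;>
    · refine Finset.sum_eq_zero fun y _ => ?_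
      rw [hzero y, mul_zero]
end

section
/- Let Y be a finite nonempty type, Z a measurable space, p, q : Y → ℝ≥0 two label distributions, and (μ_y)_{y∈Y}, (ν_y)_{y∈Y} two families of probability measures on Z. Let M ≥ 0 and let L : Y → Z → ℝ be a family of measurable loss functions with 0 ≤ L_y(z) ≤ M for all y, z. Then the risks under the two mixture joints satisfy |Σ_y p(y)·∫ L_y dμ_y − Σ_y q(y)·∫ L_y dν_y| ≤ 2M·( d_TV(p, q) + min( Σ_y p(y)·d_TV(μ_y, ν_y), Σ_y q(y)·d_TV(μ_y, ν_y) ) ), where d_TV(p,q) = (1/2)·Σ_y |p(y) − q(y)| and d_TV(μ_y, ν_y) = sup over measurable A ⊆ Z of |μ_y(A) − ν_y(A)|. -/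
/-!
Writing `a y = ∫ L y ∂μ y` and `b y = ∫ L y ∂ν y`, the gap splits as
`∑ (p y - q y) a y + ∑ q y (a y - b y)`, or symmetrically as
`∑ (p y - q y) b y + ∑ p y (a y - b y)`; the first sum is the label shift and the second the
conditional shift. For a single label, a Hahn decomposition set `S` of `μ y - ν y` shows that a
loss with values in `[0, M]` separates `μ y` from `ν y` by at most
`M (μ y S - ν y S) ≤ M · d_TV(μ y, ν y)`.
-/

open MeasureTheory

/-- Total variation distance between two measures: the supremum over measurable sets of the
absolute difference of their (real-valued) masses. -/
noncomputable def tvDist {W : Type*} [MeasurableSpace W] (μ ν : Measure W) : ℝ :=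
  ⨆ A : {A : Set W // MeasurableSet A}, |(μ A.1).toReal - (ν A.1).toReal|

/-- Total variation distance between two label distributions on a finite label space. -/
noncomputable def tvLabel {Y : Type*} [Fintype Y] (p q : Y → NNReal) : ℝ :=
  (1 / 2) * ∑ y, |(p y : ℝ) - (q y : ℝ)|

namespace MeasureTheory

variable {W : Type*} [MeasurableSpace W] {μ ν : Measure W} {f : W → ℝ} {M : ℝ}

lemma Integrable.of_nonneg_of_le [IsFiniteMeasure μ] (hf : Measurable f) (h0 : ∀ z, 0 ≤ f z)
    (hM : ∀ z, f z ≤ M) : Integrable f μ :=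
  .of_bound hf.aestronglyMeasurable M <| ae_of_all _ fun z => by
    rw [Real.norm_eq_abs, abs_of_nonneg (h0 z)]; exact hM z

lemma abs_integral_le_of_nonneg_of_le [IsProbabilityMeasure μ] (h0 : ∀ z, 0 ≤ f z)
    (hM : ∀ z, f z ≤ M) : |∫ z, f z ∂μ| ≤ M := by
  have := norm_integral_le_of_norm_le_const (μ := μ) (ae_of_all _ fun z => by
    rw [Real.norm_eq_abs, abs_of_nonneg (h0 z)]; exact hM z)
  rwa [probReal_univ, mul_one, Real.norm_eq_abs] at this

lemma integral_sub_integral_le_of_le [IsFiniteMeasure μ] (hle : ν ≤ μ) (hf : Integrable f μ)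
    (hM : ∀ z, f z ≤ M) :
    ∫ z, f z ∂μ - ∫ z, f z ∂ν ≤ M * (μ.real Set.univ - ν.real Set.univ) := by
  have : IsFiniteMeasure ν := isFiniteMeasure_of_le μ hle
  have hsplit : μ - ν + ν = μ := Measure.sub_add_cancel_of_le hle
  have hsub : (μ - ν).real Set.univ = μ.real Set.univ - ν.real Set.univ := by
    simp only [measureReal_def, Measure.sub_apply MeasurableSet.univ hle,
      ENNReal.toReal_sub_of_le (hle Set.univ) (measure_ne_top _ _)]
  calc ∫ z, f z ∂μ - ∫ z, f z ∂ν = ∫ z, f z ∂(μ - ν) := by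
        conv_lhs => rw [← hsplit]
        rw [integral_add_measure (hf.mono_measure Measure.sub_le) (hf.mono_measure hle)]
        ring
    _ ≤ ∫ _, M ∂(μ - ν) :=
        integral_mono (hf.mono_measure Measure.sub_le) (integrable_const M) hM
    _ = M * (μ.real Set.univ - ν.real Set.univ) := by
        rw [integral_const, hsub, smul_eq_mul, mul_comm]

end MeasureTheory

section TotalVariation

variable {W : Type*} [MeasurableSpace W] (μ ν : Measure W)

lemma tvDist_comm : tvDist μ ν = tvDist ν μ := by
  simp only [tvDist, abs_sub_comm (μ _).toReal]

variable [IsFiniteMeasure μ] [IsFiniteMeasure ν]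

lemma abs_measureReal_sub_le_tvDist {A : Set W} (hA : MeasurableSet A) :
    |μ.real A - ν.real A| ≤ tvDist μ ν := by
  refine le_ciSup (f := fun A : {A : Set W // MeasurableSet A} => |μ.real A - ν.real A|)
    ⟨μ.real Set.univ + ν.real Set.univ, ?_⟩ ⟨A, hA⟩
  rintro _ ⟨B, rfl⟩
  have hμ := measureReal_mono (μ := μ) (Set.subset_univ B.1)
  have hν := measureReal_mono (μ := ν) (Set.subset_univ B.1)
  exact abs_sub_le_iff.2 ⟨by linarith [measureReal_nonneg (μ := ν) (s := B.1)],
    by linarith [measureReal_nonneg (μ := μ) (s := B.1)]⟩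

lemma tvDist_nonneg : 0 ≤ tvDist μ ν := by
  simpa using abs_measureReal_sub_le_tvDist μ ν MeasurableSet.empty

variable {μ ν} {f : W → ℝ} {M : ℝ}

lemma integral_sub_integral_le_mul_tvDist (hM : 0 ≤ M) (hf : Measurable f)
    (h0 : ∀ z, 0 ≤ f z) (hfM : ∀ z, f z ≤ M) :
    ∫ z, f z ∂μ - ∫ z, f z ∂ν ≤ M * tvDist μ ν := by
  obtain ⟨S, hS, hνμ, hμν⟩ := hahn_decomposition μ ν
  have hS_le : ν.restrict S ≤ μ.restrict S := Measure.le_iff.2 fun A hA => by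
    simpa only [Measure.restrict_apply hA] using hνμ _ (hA.inter hS) Set.inter_subset_right
  have hSc_le : μ.restrict Sᶜ ≤ ν.restrict Sᶜ := Measure.le_iff.2 fun A hA => by
    simpa only [Measure.restrict_apply hA] using hμν _ (hA.inter hS.compl) Set.inter_subset_right
  have hμf : Integrable f μ := .of_nonneg_of_le hf h0 hfM
  have hνf : Integrable f ν := .of_nonneg_of_le hf h0 hfM
  have hS_gap := integral_sub_integral_le_of_le hS_le hμf.restrict hfM
  have hSc_gap : ∫ z in Sᶜ, f z ∂μ ≤ ∫ z in Sᶜ, f z ∂ν :=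
    integral_mono_measure hSc_le (ae_of_all _ h0) hνf.restrict
  calc ∫ z, f z ∂μ - ∫ z, f z ∂ν
      = (∫ z in S, f z ∂μ - ∫ z in S, f z ∂ν) +
          (∫ z in Sᶜ, f z ∂μ - ∫ z in Sᶜ, f z ∂ν) := by
        rw [← integral_add_compl hS hμf, ← integral_add_compl hS hνf]; ring
    _ ≤ M * (μ.real S - ν.real S) := by
        simp only [measureReal_restrict_apply_univ] at hS_gap; linarith
    _ ≤ M * tvDist μ ν := by
        gcongr; exact (le_abs_self _).trans (abs_measureReal_sub_le_tvDist μ ν hS)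

lemma abs_integral_sub_integral_le_mul_tvDist (hM : 0 ≤ M) (hf : Measurable f)
    (h0 : ∀ z, 0 ≤ f z) (hfM : ∀ z, f z ≤ M) :
    |∫ z, f z ∂μ - ∫ z, f z ∂ν| ≤ M * tvDist μ ν :=
  abs_sub_le_iff.2 ⟨integral_sub_integral_le_mul_tvDist hM hf h0 hfM,
    tvDist_comm μ ν ▸ integral_sub_integral_le_mul_tvDist hM hf h0 hfM⟩

end TotalVariation

section LabelShift

open Finset

variable {Y : Type*} [Fintype Y] (p q : Y → NNReal) {a b d : Y → ℝ} {M : ℝ}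

lemma tvLabel_comm : tvLabel p q = tvLabel q p := by
  simp only [tvLabel, abs_sub_comm (p _ : ℝ)]

lemma abs_sum_mul_sub_sum_mul_le (ha : ∀ y, |a y| ≤ M) (hab : ∀ y, |a y - b y| ≤ d y) :
    |∑ y, (p y : ℝ) * a y - ∑ y, (q y : ℝ) * b y| ≤
      2 * M * tvLabel p q + ∑ y, (q y : ℝ) * d y := by
  have hsplit : ∑ y, (p y : ℝ) * a y - ∑ y, (q y : ℝ) * b y
      = ∑ y, ((p y : ℝ) - q y) * a y + ∑ y, (q y : ℝ) * (a y - b y) := by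
    rw [← sum_sub_distrib, ← sum_add_distrib]
    exact sum_congr rfl fun y _ => by ring
  calc |∑ y, (p y : ℝ) * a y - ∑ y, (q y : ℝ) * b y|
      ≤ |∑ y, ((p y : ℝ) - q y) * a y| + |∑ y, (q y : ℝ) * (a y - b y)| := by
        rw [hsplit]; exact abs_add_le _ _
    _ ≤ ∑ y, |(p y : ℝ) - q y| * M + ∑ y, (q y : ℝ) * d y := by
        gcongr
        · refine (abs_sum_le_sum_abs _ _).trans (sum_le_sum fun y _ => ?_)
          rw [abs_mul]; gcongr; exact ha y
        · refine (abs_sum_le_sum_abs _ _).trans (sum_le_sum fun y _ => ?_)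
          rw [abs_mul, NNReal.abs_eq]; gcongr; exact hab y
    _ = 2 * M * tvLabel p q + ∑ y, (q y : ℝ) * d y := by
        rw [tvLabel, ← sum_mul]; ring

lemma abs_sum_mul_sub_sum_mul_le_add_min (ha : ∀ y, |a y| ≤ M) (hb : ∀ y, |b y| ≤ M)
    (hab : ∀ y, |a y - b y| ≤ d y) :
    |∑ y, (p y : ℝ) * a y - ∑ y, (q y : ℝ) * b y| ≤
      2 * M * tvLabel p q + min (∑ y, (p y : ℝ) * d y) (∑ y, (q y : ℝ) * d y) := by
  rw [← min_add_add_left]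
  refine le_min ?_ (abs_sum_mul_sub_sum_mul_le p q ha hab)
  have := abs_sum_mul_sub_sum_mul_le q p hb fun y => (abs_sub_comm _ _).trans_le (hab y)
  rwa [abs_sub_comm, tvLabel_comm] at this

end LabelShift

theorem risk_gap_le_label_shift_add_conditional_shift_general
    {Y : Type*} [Fintype Y] {Z : Type*} [MeasurableSpace Z]
    (p q : Y → NNReal)
    (μ ν : Y → Measure Z)
    (hμ : ∀ y, IsProbabilityMeasure (μ y)) (hν : ∀ y, IsProbabilityMeasure (ν y))
    (M : ℝ) (hM : 0 ≤ M)
    (L : Y → Z → ℝ) (hLm : ∀ y, Measurable (L y))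
    (hL0 : ∀ y z, 0 ≤ L y z) (hLM : ∀ y z, L y z ≤ M) :
    |∑ y, (p y : ℝ) * ∫ z, L y z ∂(μ y) - ∑ y, (q y : ℝ) * ∫ z, L y z ∂(ν y)| ≤
      2 * M * (tvLabel p q +
        min (∑ y, (p y : ℝ) * tvDist (μ y) (ν y)) (∑ y, (q y : ℝ) * tvDist (μ y) (ν y))) := by
  have hmin_nonneg : 0 ≤ min (∑ y, (p y : ℝ) * tvDist (μ y) (ν y))
      (∑ y, (q y : ℝ) * tvDist (μ y) (ν y)) :=
    le_min (Finset.sum_nonneg fun y _ => mul_nonneg (p y).coe_nonneg (tvDist_nonneg _ _))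
      (Finset.sum_nonneg fun y _ => mul_nonneg (q y).coe_nonneg (tvDist_nonneg _ _))
  calc _ ≤ 2 * M * tvLabel p q + min (∑ y, (p y : ℝ) * (M * tvDist (μ y) (ν y)))
          (∑ y, (q y : ℝ) * (M * tvDist (μ y) (ν y))) :=
        abs_sum_mul_sub_sum_mul_le_add_min p q
          (fun y => abs_integral_le_of_nonneg_of_le (hL0 y) (hLM y))
          (fun y => abs_integral_le_of_nonneg_of_le (hL0 y) (hLM y))
          (fun y => abs_integral_sub_integral_le_mul_tvDist hM (hLm y) (hL0 y) (hLM y))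
    _ = 2 * M * tvLabel p q + M * min (∑ y, (p y : ℝ) * tvDist (μ y) (ν y))
          (∑ y, (q y : ℝ) * tvDist (μ y) (ν y)) := by
        simp only [mul_left_comm _ M, ← Finset.mul_sum, mul_min_of_nonneg _ _ hM]
    _ ≤ _ := by linarith [mul_nonneg hM hmin_nonneg]

/-- **Theorem 2** (sufficiency of GLS correction, upper bound): for a loss bounded by `M`,
the gap between the (reweighted) source risk and the target risk is bounded by
`2M` times the label shift term plus the (min-weighted) conditional shift term. -/
theorem risk_gap_le_label_shift_add_conditional_shift
    {Y : Type*} [Fintype Y] [Nonempty Y] {Z : Type*} [MeasurableSpace Z]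
    (p q : Y → NNReal) (hp : ∑ y, p y = 1) (hq : ∑ y, q y = 1)
    (μ ν : Y → Measure Z)
    (hμ : ∀ y, IsProbabilityMeasure (μ y)) (hν : ∀ y, IsProbabilityMeasure (ν y))
    (M : ℝ) (hM : 0 ≤ M)
    (L : Y → Z → ℝ) (hLm : ∀ y, Measurable (L y))
    (hL0 : ∀ y z, 0 ≤ L y z) (hLM : ∀ y z, L y z ≤ M) :
    |∑ y, (p y : ℝ) * ∫ z, L y z ∂(μ y) - ∑ y, (q y : ℝ) * ∫ z, L y z ∂(ν y)| ≤
      2 * M * (tvLabel p q +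
        min (∑ y, (p y : ℝ) * tvDist (μ y) (ν y)) (∑ y, (q y : ℝ) * tvDist (μ y) (ν y))) :=
  risk_gap_le_label_shift_add_conditional_shift_general p q μ ν hμ hν M hM L hLm hL0 hLM
end

section
/- Let Y be a finite nonempty type, Z a measurable space, p, q : Y → ℝ≥0 two label distributions, and (μ_y)_{y∈Y}, (ν_y)_{y∈Y} two families of probability measures on Z. Let P = Σ_y p(y) • (μ_y ⊗ δ_y) and Q = Σ_y q(y) • (ν_y ⊗ δ_y) be the induced joint probability measures on Z × Y. Then d_TV(P, Q) ≤ d_TV(p, q) + min( Σ_y p(y)·d_TV(μ_y, ν_y), Σ_y q(y)·d_TV(μ_y, ν_y) ), where d_TV(p,q) = (1/2)·Σ_y |p(y) − q(y)| and d_TV of measures is the supremum over measurable sets of the absolute difference of their measures. -/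
open MeasureTheory

lemma abs_toReal_sub_le_tvDist {W : Type*} [MeasurableSpace W] (μ ν : Measure W)
    [IsProbabilityMeasure μ] [IsProbabilityMeasure ν] {A : Set W} (hA : MeasurableSet A) :
    |(μ A).toReal - (ν A).toReal| ≤ tvDist μ ν := by
  have hbdd : BddAbove (Set.range fun B : {B : Set W // MeasurableSet B} =>
      |(μ B.1).toReal - (ν B.1).toReal|) := by
    refine ⟨1, ?_⟩
    rintro x ⟨B, rfl⟩
    have h1 : (μ B.1).toReal ≤ 1 := by
      have := prob_le_one (μ := μ) (s := B.1)
      simpa using ENNReal.toReal_mono (by norm_num) this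
    have h2 : (ν B.1).toReal ≤ 1 := by
      have := prob_le_one (μ := ν) (s := B.1)
      simpa using ENNReal.toReal_mono (by norm_num) this
    have h3 : (0:ℝ) ≤ (μ B.1).toReal := ENNReal.toReal_nonneg
    have h4 : (0:ℝ) ≤ (ν B.1).toReal := ENNReal.toReal_nonneg
    rw [abs_sub_le_iff]
    constructor <;> linarith
  exact le_ciSup hbdd ⟨A, hA⟩

lemma weighted_bound {ι : Type*} [Fintype ι] (a b f g t : ι → ℝ)
    (hf0 : ∀ i, 0 ≤ f i) (hf1 : ∀ i, f i ≤ 1)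
    (hb : ∀ i, 0 ≤ b i)
    (hfg : ∀ i, |f i - g i| ≤ t i) (hab : ∑ i, a i = ∑ i, b i) :
    |∑ i, a i * f i - ∑ i, b i * g i| ≤
      (1 / 2) * ∑ i, |a i - b i| + ∑ i, b i * t i := by
  have h0 : ∑ i, (a i - b i) = 0 := by
    rw [Finset.sum_sub_distrib, hab]; ring
  have key : ∑ i, a i * f i - ∑ i, b i * g i =
      (∑ i, (a i - b i) * (f i - 1/2)) + ∑ i, b i * (f i - g i) := by
    have e : ∑ i, (a i - b i) * (f i - 1/2) + ∑ i, b i * (f i - g i)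
        = ∑ i, a i * f i - ∑ i, b i * g i - (1/2) * ∑ i, (a i - b i) := by
      rw [Finset.mul_sum, ← Finset.sum_add_distrib, ← Finset.sum_sub_distrib,
        ← Finset.sum_sub_distrib]
      apply Finset.sum_congr rfl
      intro i _
      ring
    rw [e, h0]; ring
  rw [key]
  have h1 : |∑ i, (a i - b i) * (f i - 1/2)| ≤ (1/2) * ∑ i, |a i - b i| := by
    calc |∑ i, (a i - b i) * (f i - 1/2)| ≤ ∑ i, |(a i - b i) * (f i - 1/2)| :=
          Finset.abs_sum_le_sum_abs _ _
      _ ≤ ∑ i, |a i - b i| * (1/2) := by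
          apply Finset.sum_le_sum
          intro i _
          rw [abs_mul]
          apply mul_le_mul_of_nonneg_left _ (abs_nonneg _)
          rw [abs_le]
          constructor <;> [linarith [hf0 i]; linarith [hf1 i]]
      _ = (1/2) * ∑ i, |a i - b i| := by rw [← Finset.sum_mul]; ring
  have h2 : |∑ i, b i * (f i - g i)| ≤ ∑ i, b i * t i := by
    calc |∑ i, b i * (f i - g i)| ≤ ∑ i, |b i * (f i - g i)| :=
          Finset.abs_sum_le_sum_abs _ _
      _ ≤ ∑ i, b i * t i := by
          apply Finset.sum_le_sum
          intro i _
          rw [abs_mul, abs_of_nonneg (hb i)]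
          exact mul_le_mul_of_nonneg_left (hfg i) (hb i)
  calc |∑ i, (a i - b i) * (f i - 1/2) + ∑ i, b i * (f i - g i)|
      ≤ |∑ i, (a i - b i) * (f i - 1/2)| + |∑ i, b i * (f i - g i)| := abs_add_le _ _
    _ ≤ (1/2) * ∑ i, |a i - b i| + ∑ i, b i * t i := add_le_add h1 h2

/-- **Joint TV decomposition lemma** (underlying Theorem 2): the total variation distance
between the two joint distributions on `Z × Y` is bounded by the label shift term plus the
min-weighted expected conditional shift term. -/
theorem tv_joint_le_label_shift_add_conditional_shift
    {Y : Type*} [Fintype Y] [Nonempty Y] [MeasurableSpace Y] [DiscreteMeasurableSpace Y]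
    {Z : Type*} [MeasurableSpace Z]
    (p q : Y → NNReal) (hp : ∑ y, p y = 1) (hq : ∑ y, q y = 1)
    (μ ν : Y → Measure Z)
    (hμ : ∀ y, IsProbabilityMeasure (μ y)) (hν : ∀ y, IsProbabilityMeasure (ν y)) :
    tvDist (∑ y, (p y : ENNReal) • (μ y).prod (Measure.dirac y))
        (∑ y, (q y : ENNReal) • (ν y).prod (Measure.dirac y)) ≤
      (1 / 2) * ∑ y, |(p y : ℝ) - (q y : ℝ)| +
        min (∑ y, (p y : ℝ) * tvDist (μ y) (ν y)) (∑ y, (q y : ℝ) * tvDist (μ y) (ν y)) := by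
  apply ciSup_le
  rintro ⟨A, hA⟩
  set s : Y → Set Z := fun y => {z | (z, y) ∈ A} with hs_def
  have hs : ∀ y, MeasurableSet (s y) := fun y =>
    hA.preimage (measurable_prodMk_right)
  -- evaluate the joint measures on A
  have happ : ∀ (c : Y → NNReal) (m : Y → Measure Z), (∀ y, IsProbabilityMeasure (m y)) →
      ((∑ y, (c y : ENNReal) • (m y).prod (Measure.dirac y)) A).toReal
        = ∑ y, (c y : ℝ) * ((m y) (s y)).toReal := by
    intro c m hm
    have h1 : (∑ y, (c y : ENNReal) • (m y).prod (Measure.dirac y)) A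
        = ∑ y, (c y : ENNReal) * (m y) (s y) := by
      rw [Measure.finset_sum_apply]
      apply Finset.sum_congr rfl
      intro y _
      rw [Measure.smul_apply, smul_eq_mul]
      congr 1
      haveI := hm y
      rw [Measure.prod_apply hA]
      have : ∀ z : Z, (Measure.dirac y) (Prod.mk z ⁻¹' A) = (s y).indicator 1 z := by
        intro z
        rw [Measure.dirac_apply]
        by_cases h : (z, y) ∈ A
        · simp [Set.indicator, h, hs_def, Set.mem_preimage]
        · simp [Set.indicator, h, hs_def, Set.mem_preimage]
      simp_rw [this]
      rw [lintegral_indicator_one (hs y)]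
    rw [h1, ENNReal.toReal_sum]
    · apply Finset.sum_congr rfl
      intro y _
      rw [ENNReal.toReal_mul, ENNReal.coe_toReal]
    · intro y _
      haveI := hm y
      exact ENNReal.mul_ne_top ENNReal.coe_ne_top (measure_ne_top _ _)
  rw [happ p μ hμ, happ q ν hν]
  set f : Y → ℝ := fun y => ((μ y) (s y)).toReal
  set g : Y → ℝ := fun y => ((ν y) (s y)).toReal
  have hf0 : ∀ y, 0 ≤ f y := fun y => ENNReal.toReal_nonneg
  have hg0 : ∀ y, 0 ≤ g y := fun y => ENNReal.toReal_nonneg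
  have hf1 : ∀ y, f y ≤ 1 := by
    intro y
    haveI := hμ y
    have := prob_le_one (μ := μ y) (s := s y)
    simpa [f] using ENNReal.toReal_mono (by norm_num) this
  have hg1 : ∀ y, g y ≤ 1 := by
    intro y
    haveI := hν y
    have := prob_le_one (μ := ν y) (s := s y)
    simpa [g] using ENNReal.toReal_mono (by norm_num) this
  have hfg : ∀ y, |f y - g y| ≤ tvDist (μ y) (ν y) := by
    intro y
    haveI := hμ y; haveI := hν y
    exact abs_toReal_sub_le_tvDist (μ y) (ν y) (hs y)
  have hsum : ∑ y, (p y : ℝ) = ∑ y, (q y : ℝ) := by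
    rw [← NNReal.coe_sum, ← NNReal.coe_sum, hp, hq]
  rw [← min_add_add_left, le_min_iff]
  constructor
  · -- bound with p-weighted conditional term
    have := weighted_bound (fun y => (q y : ℝ)) (fun y => (p y : ℝ)) g f
      (fun y => tvDist (μ y) (ν y)) hg0 hg1 (fun y => (p y).coe_nonneg)
      (fun y => by rw [abs_sub_comm]; exact hfg y) hsum.symm
    rw [← abs_sub_comm] at this
    calc |∑ y, (p y : ℝ) * f y - ∑ y, (q y : ℝ) * g y|
        ≤ (1/2) * ∑ y, |(q y : ℝ) - (p y : ℝ)| + ∑ y, (p y : ℝ) * tvDist (μ y) (ν y) := this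
      _ = (1/2) * ∑ y, |(p y : ℝ) - (q y : ℝ)| + ∑ y, (p y : ℝ) * tvDist (μ y) (ν y) := by
          simp_rw [abs_sub_comm]
  · exact weighted_bound (fun y => (p y : ℝ)) (fun y => (q y : ℝ)) f g
      (fun y => tvDist (μ y) (ν y)) hf0 hf1 (fun y => (q y).coe_nonneg) hfg hsum
end

section
/- Let a ∈ (0, 1), let Y be a finite nonempty type, let p, q : Y → ℝ≥0 be label distributions, and let (μ_y)_{y∈Y} be a common family of probability measures on a measurable space Z (conditional invariance). Let P_Y, Q_Y be the probability measures on Y with mass functions p and q, and let P_Z = Σ_y p(y) • μ_y, Q_Z = Σ_y q(y) • μ_y be the induced mixtures on Z. Then the generalized Jensen–Shannon divergences satisfy d_{JS,a}(P_Z, Q_Z) ≤ d_{JS,a}(P_Y, Q_Y), where d_{JS,a}(P, Q) = (1 − a)·KL(P ‖ (1−a)·P + a·Q) + a·KL(Q ‖ (1−a)·P + a·Q). Equivalently, when the representation is conditional invariant, the mutual information between the representation and the domain index is bounded by that between the label and the domain index: I^w(Z; D) ≤ I^w(Y; D). -/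
open MeasureTheory
open scoped Classical

/-- Kullback–Leibler divergence between two measures, with value `⊤` unless `μ ≪ ν` and the
log-likelihood ratio is integrable. -/
noncomputable def klDiv {W : Type*} [MeasurableSpace W] (μ ν : Measure W) : EReal :=
  if μ ≪ ν ∧ Integrable (llr μ ν) μ then ((∫ x, llr μ ν x ∂μ : ℝ) : EReal) else ⊤

/-- Generalized Jensen–Shannon divergence with mixing weight `a`:
`d_{JS,a}(P, Q) = (1-a)·KL(P ‖ M) + a·KL(Q ‖ M)` where `M = (1-a)·P + a·Q`. -/
noncomputable def genJS {W : Type*} [MeasurableSpace W] (a : ℝ) (μ ν : Measure W) : EReal :=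
  ((1 - a : ℝ) : EReal) * klDiv μ (ENNReal.ofReal (1 - a) • μ + ENNReal.ofReal a • ν) +
    ((a : ℝ) : EReal) * klDiv ν (ENNReal.ofReal (1 - a) • μ + ENNReal.ofReal a • ν)

/-! The measures `μ y` form a Markov kernel `κ` from labels to representations, and
`κ ∘ₘ (∑ y, w y • δ_y) = ∑ y, w y • μ y`; composition with `κ` is linear, so it also carries the
label mixture `M_Y` to the representation mixture `M_Z`. Each Kullback–Leibler term of `d_{JS,a}`
therefore decreases by the data processing inequality. -/

open ProbabilityTheory Set
open scoped ENNReal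

section

variable {W : Type*} [MeasurableSpace W] {μ ν : Measure W} [IsFiniteMeasure μ] [IsFiniteMeasure ν]

-- Mathlib's `InformationTheory.klDiv` adds the correction `ν.real univ - μ.real univ`.
lemma klDiv_eq_coe_klDiv (h : μ univ = ν univ) :
    klDiv μ ν = (InformationTheory.klDiv μ ν : EReal) := by
  by_cases hac : μ ≪ ν ∧ Integrable (llr μ ν) μ
  · rw [klDiv, if_pos hac, ← InformationTheory.toReal_klDiv_of_measure_eq hac.1 h,
      EReal.coe_ennreal_toReal (InformationTheory.klDiv_ne_top hac.1 hac.2)]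
  · rw [klDiv, if_neg hac, InformationTheory.klDiv_eq_top_iff.2 (not_and.1 hac),
      EReal.coe_ennreal_top]

lemma klDiv_comp_right_le {V : Type*} [MeasurableSpace V] (h : μ univ = ν univ)
    (κ : Kernel W V) [IsMarkovKernel κ] :
    klDiv (κ ∘ₘ μ) (κ ∘ₘ ν) ≤ klDiv μ ν := by
  rw [klDiv_eq_coe_klDiv h, klDiv_eq_coe_klDiv (by simp only [Measure.comp_apply_univ, h])]
  exact EReal.coe_ennreal_le_coe_ennreal_iff.2 (InformationTheory.klDiv_comp_right_le μ ν κ)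

lemma genJS_comp_right_le {V : Type*} [MeasurableSpace V] {a : ℝ} (ha0 : 0 ≤ a) (ha1 : a ≤ 1)
    (h : μ univ = ν univ) (κ : Kernel W V) [IsMarkovKernel κ] :
    genJS a (κ ∘ₘ μ) (κ ∘ₘ ν) ≤ genJS a μ ν := by
  set M := ENNReal.ofReal (1 - a) • μ + ENNReal.ofReal a • ν
  have hκM : κ ∘ₘ M = ENNReal.ofReal (1 - a) • (κ ∘ₘ μ) + ENNReal.ofReal a • (κ ∘ₘ ν) := by
    rw [Measure.comp_add, Measure.comp_smul, Measure.comp_smul]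
  have hμM : μ univ = M univ := by
    simp only [M, Measure.add_apply, Measure.smul_apply, smul_eq_mul, ← h, ← add_mul,
      ← ENNReal.ofReal_add (sub_nonneg.2 ha1) ha0, sub_add_cancel, ENNReal.ofReal_one, one_mul]
  have : IsFiniteMeasure M := ⟨hμM ▸ measure_lt_top μ univ⟩
  rw [genJS, genJS, ← hκM]
  gcongr
  · exact klDiv_comp_right_le hμM κ
  · exact klDiv_comp_right_le (h ▸ hμM) κ

end

section

variable {Y : Type*} [Fintype Y] [MeasurableSpace Y]

lemma comp_sum_smul_dirac [MeasurableSingletonClass Y] {V : Type*} [MeasurableSpace V]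
    (κ : Kernel Y V) (w : Y → ℝ≥0∞) :
    κ ∘ₘ (∑ y, w y • Measure.dirac y) = ∑ y, w y • κ y := by
  ext s hs
  simp [Measure.bind_apply hs κ.aemeasurable, Measure.finsetSum_apply]

lemma isProbabilityMeasure_sum_smul_dirac (w : Y → NNReal) (hw : ∑ y, w y = 1) :
    IsProbabilityMeasure (∑ y, (w y : ℝ≥0∞) • Measure.dirac y) :=
  ⟨by simpa [Measure.finsetSum_apply] using congrArg ((↑) : NNReal → ℝ≥0∞) hw⟩

end

theorem genJS_mixtures_le_genJS_labels_general
    {Y : Type*} [Fintype Y] [MeasurableSpace Y] [DiscreteMeasurableSpace Y]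
    {Z : Type*} [MeasurableSpace Z]
    (a : ℝ) (ha0 : 0 < a) (ha1 : a < 1)
    (p q : Y → NNReal) (hp : ∑ y, p y = 1) (hq : ∑ y, q y = 1)
    (μ : Y → Measure Z) (hμ : ∀ y, IsProbabilityMeasure (μ y)) :
    genJS a (∑ y, (p y : ENNReal) • μ y) (∑ y, (q y : ENNReal) • μ y) ≤
      genJS a (∑ y, (p y : ENNReal) • Measure.dirac y) (∑ y, (q y : ENNReal) • Measure.dirac y) := by
  let κ : Kernel Y Z := Kernel.ofFunOfCountable μ
  have : IsMarkovKernel κ := ⟨hμ⟩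
  have := isProbabilityMeasure_sum_smul_dirac p hp
  have := isProbabilityMeasure_sum_smul_dirac q hq
  have hmix (w : Y → ℝ≥0∞) : ∑ y, w y • μ y = κ ∘ₘ ∑ y, w y • Measure.dirac y :=
    (comp_sum_smul_dirac κ w).symm
  rw [hmix, hmix]
  exact genJS_comp_right_le ha0.le ha1.le (by simp only [measure_univ]) κ

/-- **Lemma 1**: under a conditional invariant transformation (common class-conditional
distributions `μ y`), the generalized Jensen–Shannon divergence between the representation
marginals is bounded by that between the label distributions: `I^w(Z; D) ≤ I^w(Y; D)`. -/
theorem genJS_mixtures_le_genJS_labels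
    {Y : Type*} [Fintype Y] [Nonempty Y] [MeasurableSpace Y] [DiscreteMeasurableSpace Y]
    {Z : Type*} [MeasurableSpace Z]
    (a : ℝ) (ha0 : 0 < a) (ha1 : a < 1)
    (p q : Y → NNReal) (hp : ∑ y, p y = 1) (hq : ∑ y, q y = 1)
    (μ : Y → Measure Z) (hμ : ∀ y, IsProbabilityMeasure (μ y)) :
    genJS a (∑ y, (p y : ENNReal) • μ y) (∑ y, (q y : ENNReal) • μ y) ≤
      genJS a (∑ y, (p y : ENNReal) • Measure.dirac y) (∑ y, (q y : ENNReal) • Measure.dirac y) :=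
  genJS_mixtures_le_genJS_labels_general a ha0 ha1 p q hp hq μ hμ
end

section
/- Let a ∈ (0, 1), let W be a measurable space, and let P, Q be probability measures on W. Set M = (1 − a)·P + a·Q, let β be the probability measure on Bool with β({false}) = 1 − a and β({true}) = a, and let R be the joint probability measure on W × Bool given by R = (1 − a) • (P ⊗ δ_false) + a • (Q ⊗ δ_true). Then the mutual information between W and the domain indicator equals the generalized Jensen–Shannon divergence: KL(R ‖ M ⊗ β) = (1 − a)·KL(P ‖ M) + a·KL(Q ‖ M). -/
open MeasureTheory
open scoped Classical

/-!
With respect to `M ⊗ β`, the joint law `R` has density `(x, b) ↦ dP/dM x` on the label `false`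
and `dQ/dM x` on the label `true`: the weights of `β` cancel against those in `R`. Hence the
log-likelihood ratio of `R` restricted to each label is that of the corresponding component, and
integrating it against `R` splits into `(1 - a) KL(P ‖ M) + a KL(Q ‖ M)`.
-/

open scoped ENNReal
open Measure

lemma MeasurableEmbedding.withDensity_map {X Y : Type*} [MeasurableSpace X] [MeasurableSpace Y]
    {g : X → Y} (hg : MeasurableEmbedding g) (μ : Measure X) {f : Y → ℝ≥0∞} (hf : Measurable f) :
    (μ.map g).withDensity f = (μ.withDensity (f ∘ g)).map g := by
  ext s hs
  rw [withDensity_apply _ hs, hg.map_apply, withDensity_apply _ (hg.measurable hs),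
    setLIntegral_map hs hf hg.measurable]
  rfl

section

variable {W : Type*} [MeasurableSpace W]

lemma klDiv_of_absolutelyContinuous {μ ν : Measure W} (h : μ ≪ ν) :
    klDiv μ ν = if Integrable (llr μ ν) μ then ((∫ x, llr μ ν x ∂μ : ℝ) : EReal) else ⊤ := by
  simp [klDiv, h]

variable (c d : ℝ≥0∞) (P Q : Measure W) {M : Measure W}

noncomputable def labelLaw : Measure Bool :=
  c • dirac false + d • dirac true

noncomputable def labelledMixture : Measure (W × Bool) :=
  c • P.prod (dirac false) + d • Q.prod (dirac true)

variable {c d P Q}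

def byLabel {α : Type*} (f g : W → α) (z : W × Bool) : α :=
  bif z.2 then g z.1 else f z.1

lemma Measurable.byLabel {α : Type*} [MeasurableSpace α] {f g : W → α} (hf : Measurable f)
    (hg : Measurable g) : Measurable (byLabel f g) :=
  measurable_from_prod_countable_left fun b => by cases b <;> assumption

lemma isFiniteMeasure_labelLaw (hc : c ≠ ∞) (hd : d ≠ ∞) : IsFiniteMeasure (labelLaw c d) :=
  ⟨by simp [labelLaw, lt_top_iff_ne_top, hc, hd]⟩

lemma prod_labelLaw [SFinite M] : M.prod (labelLaw c d) = labelledMixture c d M M := by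
  rw [labelLaw, prod_add, prod_smul_right, prod_smul_right, labelledMixture]

lemma labelledMixture_withDensity [SFinite P] [SFinite Q] {f : W × Bool → ℝ≥0∞}
    (hf : Measurable f) :
    (labelledMixture c d P Q).withDensity f =
      labelledMixture c d (P.withDensity fun x => f (x, false))
        (Q.withDensity fun x => f (x, true)) := by
  simp only [labelledMixture, withDensity_add_measure, withDensity_smul_measure, prod_dirac,
    (measurableEmbedding_prod_mk_right _).withDensity_map _ hf]
  rfl

lemma withDensity_byLabel_rnDeriv [SigmaFinite M] [SigmaFinite P] [SigmaFinite Q]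
    (hP : P ≪ M) (hQ : Q ≪ M) :
    (M.prod (labelLaw c d)).withDensity (byLabel (P.rnDeriv M) (Q.rnDeriv M)) =
      labelledMixture c d P Q := by
  rw [prod_labelLaw, labelledMixture_withDensity
    ((measurable_rnDeriv P M).byLabel (measurable_rnDeriv Q M))]
  exact congr_arg₂ _ (withDensity_rnDeriv_eq _ _ hP) (withDensity_rnDeriv_eq _ _ hQ)

lemma labelledMixture_absolutelyContinuous [SigmaFinite M] [SigmaFinite P] [SigmaFinite Q]
    (hP : P ≪ M) (hQ : Q ≪ M) : labelledMixture c d P Q ≪ M.prod (labelLaw c d) := by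
  rw [← withDensity_byLabel_rnDeriv hP hQ]
  exact withDensity_absolutelyContinuous _ _

lemma llr_labelledMixture [SigmaFinite M] [SigmaFinite P] [SigmaFinite Q] (hc : c ≠ ∞)
    (hd : d ≠ ∞) (hP : P ≪ M) (hQ : Q ≪ M) :
    llr (labelledMixture c d P Q) (M.prod (labelLaw c d)) =ᵐ[labelledMixture c d P Q]
      byLabel (llr P M) (llr Q M) := by
  have := isFiniteMeasure_labelLaw hc hd
  have hrnDeriv := rnDeriv_withDensity (M.prod (labelLaw c d))
    ((measurable_rnDeriv P M).byLabel (measurable_rnDeriv Q M))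
  rw [withDensity_byLabel_rnDeriv hP hQ] at hrnDeriv
  filter_upwards [(labelledMixture_absolutelyContinuous hP hQ).ae_le hrnDeriv] with z hz
  rcases z with ⟨x, _ | _⟩ <;> simp only [llr_def, hz] <;> rfl

lemma integrable_labelledMixture_iff {E : Type*} [NormedAddCommGroup E] [SFinite P] [SFinite Q]
    (hc₀ : c ≠ 0) (hc : c ≠ ∞) (hd₀ : d ≠ 0) (hd : d ≠ ∞) {f g : W → E} :
    Integrable (byLabel f g) (labelledMixture c d P Q) ↔ Integrable f P ∧ Integrable g Q := by
  rw [labelledMixture, integrable_add_measure, integrable_smul_measure hc₀ hc,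
    integrable_smul_measure hd₀ hd, prod_dirac, prod_dirac,
    (measurableEmbedding_prod_mk_right _).integrable_map_iff,
    (measurableEmbedding_prod_mk_right _).integrable_map_iff]
  rfl

lemma integral_labelledMixture {E : Type*} [NormedAddCommGroup E] [NormedSpace ℝ E] [SFinite P]
    [SFinite Q] (hc : c ≠ ∞) (hd : d ≠ ∞) {f g : W → E} (hf : Integrable f P)
    (hg : Integrable g Q) :
    ∫ z, byLabel f g z ∂labelledMixture c d P Q =
      c.toReal • ∫ x, f x ∂P + d.toReal • ∫ x, g x ∂Q := by
  have hemb := measurableEmbedding_prod_mk_right (α := Bool) (β := W)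
  have hfP : Integrable (byLabel f g) (map (·, false) P) := (hemb false).integrable_map_iff.2 hf
  have hgQ : Integrable (byLabel f g) (map (·, true) Q) := (hemb true).integrable_map_iff.2 hg
  rw [labelledMixture, prod_dirac, prod_dirac, integral_add_measure (hfP.smul_measure hc)
    (hgQ.smul_measure hd), integral_smul_measure, integral_smul_measure,
    (hemb false).integral_map, (hemb true).integral_map]
  rfl

theorem klDiv_labelledMixture [SigmaFinite M] [SigmaFinite P] [SigmaFinite Q] (hc₀ : c ≠ 0)
    (hc : c ≠ ∞) (hd₀ : d ≠ 0) (hd : d ≠ ∞) (hP : P ≪ M) (hQ : Q ≪ M) :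
    klDiv (labelledMixture c d P Q) (M.prod (labelLaw c d)) =
      (c.toReal : EReal) * klDiv P M + (d.toReal : EReal) * klDiv Q M := by
  have hac := labelledMixture_absolutelyContinuous (c := c) (d := d) hP hQ
  have hllr := llr_labelledMixture hc hd hP hQ
  have hcpos : 0 < c.toReal := ENNReal.toReal_pos hc₀ hc
  have hdpos : 0 < d.toReal := ENNReal.toReal_pos hd₀ hd
  rw [klDiv_of_absolutelyContinuous hac, klDiv_of_absolutelyContinuous hP,
    klDiv_of_absolutelyContinuous hQ, integrable_congr hllr, integral_congr_ae hllr,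
    integrable_labelledMixture_iff hc₀ hc hd₀ hd]
  by_cases hintP : Integrable (llr P M) P <;> by_cases hintQ : Integrable (llr Q M) Q
  · rw [if_pos ⟨hintP, hintQ⟩, if_pos hintP, if_pos hintQ,
      integral_labelledMixture hc hd hintP hintQ]
    push_cast [smul_eq_mul]
    rfl
  all_goals simp [hintP, hintQ, EReal.coe_mul_top_of_pos hcpos, EReal.coe_mul_top_of_pos hdpos,
    ← EReal.coe_mul]

end

/-- **Eq. (9)**: the mutual information between the representation and the binary domain
indicator equals the generalized Jensen–Shannon divergence between the two domain
distributions: `KL(R ‖ M ⊗ β) = (1-a)·KL(P ‖ M) + a·KL(Q ‖ M)`. -/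
theorem mutualInfo_eq_genJS
    {W : Type*} [MeasurableSpace W]
    (a : ℝ) (ha0 : 0 < a) (ha1 : a < 1)
    (P Q : Measure W) [IsProbabilityMeasure P] [IsProbabilityMeasure Q] :
    klDiv
        (ENNReal.ofReal (1 - a) • P.prod (Measure.dirac false) +
          ENNReal.ofReal a • Q.prod (Measure.dirac true))
        ((ENNReal.ofReal (1 - a) • P + ENNReal.ofReal a • Q).prod
          (ENNReal.ofReal (1 - a) • Measure.dirac false + ENNReal.ofReal a • Measure.dirac true)) =
      ((1 - a : ℝ) : EReal) * klDiv P (ENNReal.ofReal (1 - a) • P + ENNReal.ofReal a • Q) +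
        ((a : ℝ) : EReal) * klDiv Q (ENNReal.ofReal (1 - a) • P + ENNReal.ofReal a • Q) := by
  have hc₀ : ENNReal.ofReal (1 - a) ≠ 0 := by simpa using ha1
  have hd₀ : ENNReal.ofReal a ≠ 0 := by simpa using ha0
  set M := ENNReal.ofReal (1 - a) • P + ENNReal.ofReal a • Q
  have : IsFiniteMeasure M := ⟨by simp [M, ENNReal.add_lt_top]⟩
  have key := klDiv_labelledMixture hc₀ ENNReal.ofReal_ne_top hd₀ ENNReal.ofReal_ne_top
    ((absolutelyContinuous_smul hc₀).add_right _ : P ≪ M)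
    ((absolutelyContinuous_smul hd₀).add_right' _ : Q ≪ M)
  rwa [ENNReal.toReal_ofReal (by linarith), ENNReal.toReal_ofReal ha0.le] at key
end

section
/- Let X and Z be measurable spaces, and let P, Q be probability measures on X × Bool. Let g : X → Z be a measurable marginal invariant transformation, i.e. P.map (g ∘ Prod.fst) = Q.map (g ∘ Prod.fst), and suppose label shift exists, i.e. P.map Prod.snd ≠ Q.map Prod.snd. Then for every measurable hypothesis h : Z → Bool, the joint error is strictly positive: P({(x, y) | h(g(x)) ≠ y}) + Q({(x, y) | h(g(x)) ≠ y}) > 0. -/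
open MeasureTheory

namespace MeasureTheory.Measure

theorem map_eq_map_of_ae_eq_comp {α β γ : Type*} [MeasurableSpace α] [MeasurableSpace β]
    [MeasurableSpace γ] {μ ν : Measure α} {φ : α → β} {k : β → γ} {ℓ : α → γ}
    (hφ : Measurable φ) (hk : Measurable k) (hmap : μ.map φ = ν.map φ)
    (hμ : k ∘ φ =ᵐ[μ] ℓ) (hν : k ∘ φ =ᵐ[ν] ℓ) :
    μ.map ℓ = ν.map ℓ := by
  rw [← map_congr hμ, ← map_congr hν, ← map_map hk hφ, ← map_map hk hφ, hmap]

end MeasureTheory.Measure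

theorem marginal_invariant_positive_joint_error_general
    {X Z : Type*} [MeasurableSpace X] [MeasurableSpace Z]
    (P Q : Measure (X × Bool))
    (g : X → Z) (hg : Measurable g)
    (hmar : P.map (g ∘ Prod.fst) = Q.map (g ∘ Prod.fst))
    (hlabel : P.map Prod.snd ≠ Q.map Prod.snd)
    (h : Z → Bool) (hh : Measurable h) :
    0 < P {xy | h (g xy.1) ≠ xy.2} + Q {xy | h (g xy.1) ≠ xy.2} := by
  refine pos_iff_ne_zero.mpr fun hzero => hlabel ?_
  -- zero error on a domain says exactly that `h ∘ g ∘ Prod.fst =ᵐ Prod.snd` there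
  obtain ⟨hP, hQ⟩ := add_eq_zero.mp hzero
  exact Measure.map_eq_map_of_ae_eq_comp (hg.comp measurable_fst) hh hmar hP hQ

/-- **Remark 1**: under label shift, a marginal invariant transformation never admits a
hypothesis with zero joint error on both domains. -/
theorem marginal_invariant_positive_joint_error
    {X Z : Type*} [MeasurableSpace X] [MeasurableSpace Z]
    (P Q : Measure (X × Bool)) [IsProbabilityMeasure P] [IsProbabilityMeasure Q]
    (g : X → Z) (hg : Measurable g)
    (hmar : P.map (g ∘ Prod.fst) = Q.map (g ∘ Prod.fst))
    (hlabel : P.map Prod.snd ≠ Q.map Prod.snd)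
    (h : Z → Bool) (hh : Measurable h) :
    0 < P {xy | h (g xy.1) ≠ xy.2} + Q {xy | h (g xy.1) ≠ xy.2} :=
  marginal_invariant_positive_joint_error_general P Q g hg hmar hlabel h hh
end
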